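/- arXiv:2207.06246 — 2 statements merged into one kernel-verified Lean document; each statement's English description precedes it below -/
import Mathlib

section
/- Let 𝔡, K ∈ ℕ, for every k ∈ {1,…,K} let ψ_k : ℝ^𝔡 → ℝ be continuously differentiable, let U = {θ ∈ ℝ^𝔡 : min_{k∈{1,…,K}} ‖(∇ψ_k)(θ)‖ > 0}, let 𝓛 ∈ C(U,ℝ), let 𝒢 : U → ℝ^𝔡 be locally bounded and measurable, assume for all θ ∈ U and all k, l ∈ {1,…,K} with k ≠ l that ⟨(∇ψ_k)(θ), (∇ψ_l)(θ)⟩ = 0, let γ ∈ C([0,∞),[0,∞)) and Θ ∈ C([0,∞),U) satisfy for all t ∈ [0,∞) that Θ_t = Θ_0 − ∫₀ᵗ γ(s) ( 𝒢(Θ_s) − Σ_{k=1}^K ‖(∇ψ_k)(Θ_s)‖⁻² ⟨𝒢(Θ_s), (∇ψ_k)(Θ_s)⟩ (∇ψ_k)(Θ_s) ) ds, and assume that there exist 𝔏_r ∈ C¹(U,ℝ), r ∈ ℕ, such that for every compact K ⊆ U it holds that sup_{r∈ℕ} sup_{θ∈K} ‖∇𝔏_r(θ)‖ < ∞ and such that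 for every θ ∈ U it holds that lim_{r→∞} 𝔏_r(θ) = 𝓛(θ) and lim_{r→∞} ∇𝔏_r(θ) = 𝒢(θ). Then (i) for all k ∈ {1,…,K} and all t ∈ [0,∞) it holds that ψ_k(Θ_t) = ψ_k(Θ_0), and (ii) for all s, t ∈ [0,∞) with s ≤ t it holds that 𝓛(Θ_t) = 𝓛(Θ_s) − ∫_s^t γ(u) ‖ 𝒢(Θ_u) − Σ_{k=1}^K ‖(∇ψ_k)(Θ_u)‖⁻² ⟨𝒢(Θ_u), (∇ψ_k)(Θ_u)⟩ (∇ψ_k)(Θ_u) ‖² du ≤ 𝓛(Θ_s). -/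
/-!
The velocity of `Θ` is `-γ • P 𝒢(Θ)`, where `P` (`orthogonalPart`) removes the components along
the pairwise orthogonal gradients `∇ψ_k`; hence `⟪∇ψ_k, Θ'⟫ = 0` and `⟪𝒢, Θ'⟫ = -γ ‖P 𝒢‖²`.
As `Θ'` is merely integrable, the chain rule for a `C¹` function `f` along `Θ` goes through
absolute continuity: `f` is Lipschitz on the compact trace of `Θ`, so `f ∘ Θ` is absolutely
continuous, and Lebesgue differentiation identifies its a.e. derivative. Applied to `ψ_k` this
gives (i). Applied to `𝔏_r` it gives the identity for `𝔏_r`, and dominated convergence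
(the gradients of `𝔏_r` are bounded on the trace) lets `r → ∞`.
-/

open MeasureTheory Set Filter Topology
open scoped RealInnerProductSpace

theorem IsCompact.exists_bound_of_locally_bounded {X F : Type*} [PseudoMetricSpace X]
    [SeminormedAddCommGroup F] {f : X → F} {A : Set X} (hA : IsCompact A)
    (h : ∀ y ∈ A, ∃ r > (0 : ℝ), ∃ C : ℝ, ∀ x ∈ Metric.ball y r, ‖f x‖ ≤ C) :
    ∃ C : ℝ, ∀ x ∈ A, ‖f x‖ ≤ C := by
  choose! r hr C hC using h
  obtain ⟨t, ht, hcov⟩ := hA.elim_nhds_subcover (fun θ => Metric.ball θ (r θ))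
    fun θ hθ => Metric.ball_mem_nhds θ (hr θ hθ)
  obtain ⟨M, hM⟩ := (t.image C).exists_le
  refine ⟨M, fun x hx => ?_⟩
  obtain ⟨θ, hθt, hxθ⟩ := mem_iUnion₂.mp (hcov hx)
  exact (hC θ (ht θ hθt) x hxθ).trans (hM _ (Finset.mem_image_of_mem C hθt))

theorem AbsolutelyContinuousOnInterval.of_dist_le_mul {X Y : Type*} [PseudoMetricSpace X]
    [PseudoMetricSpace Y] {f : ℝ → X} {g : ℝ → Y} {a b C : ℝ}
    (hg : AbsolutelyContinuousOnInterval g a b)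
    (h : ∀ x ∈ uIcc a b, ∀ y ∈ uIcc a b, dist (f x) (f y) ≤ C * dist (g x) (g y)) :
    AbsolutelyContinuousOnInterval f a b := by
  unfold AbsolutelyContinuousOnInterval at hg ⊢
  have hlim := hg.const_mul C
  rw [mul_zero] at hlim
  refine squeeze_zero' (Eventually.of_forall fun E => Finset.sum_nonneg fun _ _ => dist_nonneg)
    ?_ hlim
  filter_upwards [mem_inf_of_right (mem_principal_self _)] with E hE
  rw [Finset.mul_sum]
  exact Finset.sum_le_sum fun i hi => h _ (hE.1 i hi).1 _ (hE.1 i hi).2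

variable {E : Type*} [NormedAddCommGroup E] [InnerProductSpace ℝ E]

section OrthogonalPart

variable {ι : Type*} [Fintype ι]

/-- For pairwise orthogonal `n l` this is the orthogonal projection of `G` onto the orthogonal
complement of their span; the terms with `n l = 0` vanish, as `0⁻¹ = 0`. -/
noncomputable def orthogonalPart (n : ι → E) (G : E) : E :=
  G - ∑ l, ((‖n l‖ ^ 2)⁻¹ * ⟪G, n l⟫) • n l

variable {n : ι → E}

theorem inner_orthogonalPart_eq_zero (hn : Pairwise fun k l => ⟪n k, n l⟫ = 0) (G : E) (k : ι) :
    ⟪n k, orthogonalPart n G⟫ = 0 := by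
  rcases eq_or_ne (n k) 0 with hk | hk
  · rw [hk, inner_zero_left]
  classical
  rw [orthogonalPart, inner_sub_right, inner_sum, Finset.sum_eq_single k
    (fun l _ hl => by rw [real_inner_smul_right, hn hl.symm, mul_zero]) (by simp),
    real_inner_smul_right, real_inner_self_eq_norm_sq, real_inner_comm]
  field_simp
  ring

theorem inner_orthogonalPart_eq_norm_sq (hn : Pairwise fun k l => ⟪n k, n l⟫ = 0) (G : E) :
    ⟪G, orthogonalPart n G⟫ = ‖orthogonalPart n G‖ ^ 2 := by
  have hsum : ⟪∑ l, ((‖n l‖ ^ 2)⁻¹ * ⟪G, n l⟫) • n l, orthogonalPart n G⟫ = 0 := by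
    simp only [sum_inner, real_inner_smul_left, inner_orthogonalPart_eq_zero hn, mul_zero,
      Finset.sum_const_zero]
  rw [← real_inner_self_eq_norm_sq]
  nth_rewrite 2 [orthogonalPart]
  rw [inner_sub_left, hsum, sub_zero]

theorem norm_orthogonalPart_le (hn : Pairwise fun k l => ⟪n k, n l⟫ = 0) (G : E) :
    ‖orthogonalPart n G‖ ≤ ‖G‖ := by
  have h := inner_orthogonalPart_eq_norm_sq hn G ▸ real_inner_le_norm G (orthogonalPart n G)
  nlinarith [norm_nonneg G, norm_nonneg (orthogonalPart n G)]

theorem Measurable.orthogonalPart [MeasurableSpace E] [BorelSpace E] [SecondCountableTopology E]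
    {α : Type*} [MeasurableSpace α] {n : α → ι → E} {G : α → E}
    (hn : ∀ l, Measurable fun x => n x l) (hG : Measurable G) :
    Measurable fun x => orthogonalPart (n x) (G x) := by
  unfold _root_.orthogonalPart
  fun_prop

theorem IntervalIntegrable.smul_orthogonalPart_comp [MeasurableSpace E] [BorelSpace E]
    [SecondCountableTopology E] {n : E → ι → E} {G : E → E} {U : Set E} {γ : ℝ → ℝ}
    {Θ : ℝ → E} {a b : ℝ} (hn : ∀ l, Continuous fun x => n x l) (hG : Measurable G)
    (hGloc : ∀ θ ∈ U, ∃ r > (0 : ℝ), ∃ C : ℝ, ∀ x ∈ Metric.ball θ r, ‖G x‖ ≤ C)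
    (horth : ∀ θ ∈ U, Pairwise fun k l => ⟪n θ k, n θ l⟫ = 0) (hγ : ContinuousOn γ (uIcc a b))
    (hΘ : ContinuousOn Θ (uIcc a b)) (hΘU : MapsTo Θ (uIcc a b) U) :
    IntervalIntegrable (fun u => γ u • orthogonalPart (n (Θ u)) (G (Θ u))) volume a b := by
  obtain ⟨C, hC⟩ := (isCompact_uIcc.image_of_continuousOn hΘ).exists_bound_of_locally_bounded
    fun θ hθ => hGloc θ (hΘU.image_subset hθ)
  refine IntervalIntegrable.continuousOn_smul ?_ hγ
  rw [intervalIntegrable_iff', uIcc]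
  refine (integrable_const C).mono' ((Measurable.orthogonalPart (fun l => (hn l).measurable) hG
    ).comp_aemeasurable (hΘ.aemeasurable measurableSet_Icc)).aestronglyMeasurable
    ((ae_restrict_iff' measurableSet_Icc).2 (.of_forall fun u hu => ?_))
  exact (norm_orthogonalPart_le (horth _ (hΘU hu)) _).trans (hC _ (mem_image_of_mem Θ hu))

end OrthogonalPart

theorem ContDiffOn.continuousOn_gradient [CompleteSpace E] {f : E → ℝ} {U : Set E} (hU : IsOpen U)
    (hf : ContDiffOn ℝ 1 f U) : ContinuousOn (gradient f) U :=
  (InnerProductSpace.toDual ℝ E).symm.continuous.comp_continuousOn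
    (hf.continuousOn_fderiv_of_isOpen hU le_rfl)

theorem ContDiffOn.locallyLipschitzOn_of_isOpen {F : Type*} [NormedAddCommGroup F]
    [NormedSpace ℝ F] {f : E → F} {U : Set E} (hU : IsOpen U) (hf : ContDiffOn ℝ 1 f U) :
    LocallyLipschitzOn U f := fun _ hx =>
  let ⟨K, t, ht, hK⟩ := (hf.contDiffAt (hU.mem_nhds hx)).exists_lipschitzOnWith
  ⟨K, t, nhdsWithin_le_nhds ht, hK⟩

theorem IntervalIntegrable.continuousOn_inner {g v : ℝ → E} {a b : ℝ}
    (hv : IntervalIntegrable v volume a b) (hg : ContinuousOn g (uIcc a b)) :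
    IntervalIntegrable (fun x => ⟪g x, v x⟫) volume a b := by
  obtain ⟨C, hC⟩ := isCompact_uIcc.exists_bound_of_continuousOn hg
  rw [intervalIntegrable_iff] at hv ⊢
  refine (hv.norm.const_mul C).mono' (((hg.mono uIoc_subset_uIcc).aestronglyMeasurable
    measurableSet_uIoc).inner hv.aestronglyMeasurable)
    ((ae_restrict_iff' measurableSet_uIoc).2 (.of_forall fun x hx => ?_))
  exact (norm_inner_le_norm _ _).trans
    (mul_le_mul_of_nonneg_right (hC x (uIoc_subset_uIcc hx)) (norm_nonneg _))

section IntegralCurve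

variable {Φ v : ℝ → E} {a b : ℝ}

theorem continuousOn_of_eq_sub_integral (hv : IntervalIntegrable v volume a b)
    (hΦ : ∀ t ∈ Icc a b, Φ t = Φ a - ∫ u in a..t, v u) : ContinuousOn Φ (Icc a b) := by
  rcases le_or_gt a b with hab | hba
  · rw [intervalIntegrable_iff'] at hv
    rw [← uIcc_of_le hab] at hΦ ⊢
    exact (continuousOn_const.sub (intervalIntegral.continuousOn_primitive_interval hv)).congr hΦ
  · simp [Icc_eq_empty_of_lt hba]

theorem dist_le_dist_integral_norm_of_eq_sub_integral (hv : IntervalIntegrable v volume a b)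
    (hΦ : ∀ t ∈ Icc a b, Φ t = Φ a - ∫ u in a..t, v u) {x y : ℝ} (hx : x ∈ Icc a b)
    (hy : y ∈ Icc a b) :
    dist (Φ x) (Φ y) ≤ dist (∫ u in a..x, ‖v u‖) (∫ u in a..y, ‖v u‖) := by
  have hvi : ∀ t ∈ Icc a b, IntervalIntegrable v volume a t := fun t ht =>
    hv.mono_set (uIcc_subset_uIcc left_mem_uIcc (Icc_subset_uIcc ht))
  rw [dist_eq_norm, Real.dist_eq, abs_sub_comm, hΦ x hx, hΦ y hy, sub_sub_sub_cancel_left,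
    intervalIntegral.integral_interval_sub_left (hvi y hy) (hvi x hx),
    intervalIntegral.integral_interval_sub_left (hvi y hy).norm (hvi x hx).norm]
  exact intervalIntegral.norm_integral_le_abs_integral_norm

theorem eq_sub_integral_of_le {c s : ℝ} (hv : ∀ t, c ≤ t → IntervalIntegrable v volume c t)
    (hΦ : ∀ t, c ≤ t → Φ t = Φ c - ∫ u in c..t, v u) (hcs : c ≤ s) (t : ℝ) (hst : s ≤ t) :
    Φ t = Φ s - ∫ u in s..t, v u := by
  rw [hΦ t (hcs.trans hst), hΦ s hcs,
    ← intervalIntegral.integral_interval_sub_left (hv t (hcs.trans hst)) (hv s hcs)]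
  abel

theorem ContDiffOn.apply_eq_sub_integral_inner_gradient [CompleteSpace E] {f : E → ℝ}
    {U : Set E} (hU : IsOpen U) (hf : ContDiffOn ℝ 1 f U) (hab : a ≤ b)
    (hv : IntervalIntegrable v volume a b)
    (hΦ : ∀ t ∈ Icc a b, Φ t = Φ a - ∫ u in a..t, v u) (hΦU : MapsTo Φ (Icc a b) U) :
    f (Φ b) = f (Φ a) - ∫ u in a..b, ⟪gradient f (Φ u), v u⟫ := by
  have hΦc := continuousOn_of_eq_sub_integral hv hΦ
  have hint : IntervalIntegrable (fun u => ⟪gradient f (Φ u), v u⟫) volume a b :=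
    hv.continuousOn_inner (uIcc_of_le hab ▸ (hf.continuousOn_gradient hU).comp hΦc hΦU)
  obtain ⟨L, hL⟩ : ∃ L, LipschitzOnWith L f (Φ '' Icc a b) :=
    ((hf.locallyLipschitzOn_of_isOpen hU).mono hΦU.image_subset).exists_lipschitzOnWith_of_compact
      (isCompact_Icc.image_of_continuousOn hΦc)
  have hfΦ : AbsolutelyContinuousOnInterval (fun t => f (Φ t)) a b := by
    refine (hv.norm.absolutelyContinuousOnInterval_intervalIntegral left_mem_uIcc
      ).of_dist_le_mul (C := L) fun x hx y hy => ?_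
    rw [uIcc_of_le hab] at hx hy
    exact (hL.dist_le_mul _ (mem_image_of_mem _ hx) _ (mem_image_of_mem _ hy)).trans
      (mul_le_mul_of_nonneg_left (dist_le_dist_integral_norm_of_eq_sub_integral hv hΦ hx hy)
        L.2)
  have hderiv : ∀ᵐ x, x ∈ uIcc a b →
      HasDerivAt (fun t => f (Φ t) + ∫ u in a..t, ⟪gradient f (Φ u), v u⟫) 0 x := by
    filter_upwards [hv.ae_hasDerivAt_integral, hint.ae_hasDerivAt_integral,
      Measure.ae_ne volume a, Measure.ae_ne volume b] with x hvx hix hxa hxb hx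
    have hxIoo : x ∈ Ioo a b := by
      rw [uIcc_of_le hab] at hx
      exact ⟨hx.1.lt_of_ne' hxa, hx.2.lt_of_ne hxb⟩
    have hΦx : HasDerivAt Φ (-v x) x :=
      ((hvx hx a left_mem_uIcc).const_sub (Φ a)).congr_of_eventuallyEq <|
        eventually_of_mem (Ioo_mem_nhds hxIoo.1 hxIoo.2) fun t ht => hΦ t (Ioo_subset_Icc_self ht)
    have hfx : HasGradientAt f (gradient f (Φ x)) (Φ x) :=
      ((hf.contDiffAt (hU.mem_nhds (hΦU (Ioo_subset_Icc_self hxIoo)))).differentiableAt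
        one_ne_zero).hasGradientAt
    have := (hfx.hasFDerivAt.comp_hasDerivAt x hΦx).add (hix hx a left_mem_uIcc)
    rwa [InnerProductSpace.toDual_apply_apply, inner_neg_right, neg_add_cancel] at this
  obtain ⟨C, hC⟩ := (hfΦ.add (hint.absolutelyContinuousOnInterval_intervalIntegral
    left_mem_uIcc)).const_of_ae_hasDerivAt_zero hderiv
  have ha := hC a left_mem_uIcc
  have hb := hC b right_mem_uIcc
  simp only [Pi.add_apply, intervalIntegral.integral_same, add_zero] at ha hb
  linarith

theorem apply_eq_sub_integral_inner_of_tendsto_gradient [CompleteSpace E] {ι : Type*}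
    {l : Filter ι} [l.IsCountablyGenerated] [l.NeBot] {𝔏 : ι → E → ℝ} {𝓛 : E → ℝ} {𝒢 : E → E}
    {U : Set E} (hU : IsOpen U) (h𝔏 : ∀ r, ContDiffOn ℝ 1 (𝔏 r) U)
    (hlim𝓛 : ∀ θ ∈ U, Tendsto (fun r => 𝔏 r θ) l (𝓝 (𝓛 θ)))
    (hlim𝒢 : ∀ θ ∈ U, Tendsto (fun r => gradient (𝔏 r) θ) l (𝓝 (𝒢 θ)))
    (hab : a ≤ b) (hv : IntervalIntegrable v volume a b)
    (hΦ : ∀ t ∈ Icc a b, Φ t = Φ a - ∫ u in a..t, v u) (hΦU : MapsTo Φ (Icc a b) U)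
    {C : ℝ} (hC : ∀ r, ∀ u ∈ Icc a b, ‖gradient (𝔏 r) (Φ u)‖ ≤ C) :
    𝓛 (Φ b) = 𝓛 (Φ a) - ∫ u in a..b, ⟪𝒢 (Φ u), v u⟫ := by
  have hΦc := continuousOn_of_eq_sub_integral hv hΦ
  have hconv : Tendsto (fun r => ∫ u in a..b, ⟪gradient (𝔏 r) (Φ u), v u⟫) l
      (𝓝 (∫ u in a..b, ⟪𝒢 (Φ u), v u⟫)) := by
    refine intervalIntegral.tendsto_integral_filter_of_dominated_convergence (fun u => C * ‖v u‖)
      (.of_forall fun r => ?_) (.of_forall fun r => .of_forall fun u hu => ?_)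
      (hv.norm.const_mul C) (.of_forall fun u hu => ?_)
    · exact (intervalIntegrable_iff.1 (hv.continuousOn_inner (uIcc_of_le hab ▸
        ((h𝔏 r).continuousOn_gradient hU).comp hΦc hΦU))).aestronglyMeasurable
    · rw [uIoc_of_le hab] at hu
      exact (norm_inner_le_norm _ _).trans
        (mul_le_mul_of_nonneg_right (hC r u (Ioc_subset_Icc_self hu)) (norm_nonneg _))
    · rw [uIoc_of_le hab] at hu
      exact (hlim𝒢 _ (hΦU (Ioc_subset_Icc_self hu))).inner tendsto_const_nhds
  have hchain : ∀ r, 𝔏 r (Φ b) = 𝔏 r (Φ a) - ∫ u in a..b, ⟪gradient (𝔏 r) (Φ u), v u⟫ :=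
    fun r => (h𝔏 r).apply_eq_sub_integral_inner_gradient hU hab hv hΦ hΦU
  refine tendsto_nhds_unique (hlim𝓛 _ (hΦU (right_mem_Icc.2 hab))) ?_
  simpa only [hchain] using (hlim𝓛 _ (hΦU (left_mem_Icc.2 hab))).sub hconv

end IntegralCurve

theorem stmt2_general
    (𝔡 K : ℕ)
    (ψ : Fin K → EuclideanSpace ℝ (Fin 𝔡) → ℝ)
    (hψ : ∀ k, ContDiff ℝ 1 (ψ k))
    (U : Set (EuclideanSpace ℝ (Fin 𝔡)))
    (hUdef : U = {θ : EuclideanSpace ℝ (Fin 𝔡) | ∀ k : Fin K, 0 < ‖gradient (ψ k) θ‖})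
    (𝓛 : EuclideanSpace ℝ (Fin 𝔡) → ℝ)
    (𝒢 : EuclideanSpace ℝ (Fin 𝔡) → EuclideanSpace ℝ (Fin 𝔡))
    (h𝒢meas : Measurable 𝒢)
    (h𝒢loc : ∀ θ ∈ U, ∃ r > (0:ℝ), ∃ C : ℝ, ∀ x ∈ Metric.ball θ r, ‖𝒢 x‖ ≤ C)
    (horth : ∀ θ ∈ U, ∀ k l : Fin K, k ≠ l →
      ⟪gradient (ψ k) θ, gradient (ψ l) θ⟫ = 0)
    (γ : ℝ → ℝ) (hγcont : ContinuousOn γ (Set.Ici 0)) (hγnonneg : ∀ t, 0 ≤ t → 0 ≤ γ t)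
    (Θ : ℝ → EuclideanSpace ℝ (Fin 𝔡))
    (hΘcont : ContinuousOn Θ (Set.Ici 0))
    (hΘU : ∀ t : ℝ, 0 ≤ t → Θ t ∈ U)
    (hflow : ∀ t : ℝ, 0 ≤ t → Θ t = Θ 0 - ∫ s in (0:ℝ)..t,
      γ s • (𝒢 (Θ s) - ∑ k : Fin K,
        ((‖gradient (ψ k) (Θ s)‖ ^ 2)⁻¹ * ⟪𝒢 (Θ s), gradient (ψ k) (Θ s)⟫) •
          gradient (ψ k) (Θ s)))
    (𝔏 : ℕ → EuclideanSpace ℝ (Fin 𝔡) → ℝ)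
    (h𝔏 : ∀ r : ℕ, ContDiffOn ℝ 1 (𝔏 r) U)
    (hbdd : ∀ Kc : Set (EuclideanSpace ℝ (Fin 𝔡)), Kc ⊆ U → IsCompact Kc →
      ∃ C : ℝ, ∀ r : ℕ, ∀ θ ∈ Kc, ‖gradient (𝔏 r) θ‖ ≤ C)
    (hlim𝓛 : ∀ θ ∈ U, Filter.Tendsto (fun r : ℕ => 𝔏 r θ) Filter.atTop (nhds (𝓛 θ)))
    (hlim𝒢 : ∀ θ ∈ U, Filter.Tendsto (fun r : ℕ => gradient (𝔏 r) θ) Filter.atTop (nhds (𝒢 θ))) :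
    (∀ k : Fin K, ∀ t : ℝ, 0 ≤ t → ψ k (Θ t) = ψ k (Θ 0)) ∧
    (∀ s t : ℝ, 0 ≤ s → s ≤ t →
      (𝓛 (Θ t) = 𝓛 (Θ s) - ∫ u in s..t,
        γ u * ‖𝒢 (Θ u) - ∑ k : Fin K,
          ((‖gradient (ψ k) (Θ u)‖ ^ 2)⁻¹ * ⟪𝒢 (Θ u), gradient (ψ k) (Θ u)⟫) •
            gradient (ψ k) (Θ u)‖ ^ 2) ∧
      𝓛 (Θ t) ≤ 𝓛 (Θ s)) := by
  have hgradψ : ∀ k, Continuous (gradient (ψ k)) := fun k =>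
    continuousOn_univ.1 ((hψ k).contDiffOn.continuousOn_gradient isOpen_univ)
  have hU : IsOpen U := by
    rw [hUdef, ofPred_forall]
    exact isOpen_iInter_of_finite fun k => isOpen_lt continuous_const (hgradψ k).norm
  have hpairwise : ∀ θ ∈ U, Pairwise fun k l => ⟪gradient (ψ k) θ, gradient (ψ l) θ⟫ = 0 :=
    fun θ hθ k l => horth θ hθ k l
  set F := fun x => orthogonalPart (fun k => gradient (ψ k) x) (𝒢 x)
  have hv : ∀ a b, 0 ≤ a → 0 ≤ b → IntervalIntegrable (fun u => γ u • F (Θ u)) volume a b := by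
    intro a b ha hb
    have hsub : uIcc a b ⊆ Ici 0 := fun u hu => (le_min ha hb).trans hu.1
    exact .smul_orthogonalPart_comp (n := fun x k => gradient (ψ k) x) hgradψ h𝒢meas h𝒢loc
      hpairwise (hγcont.mono hsub) (hΘcont.mono hsub) fun u hu => hΘU u (hsub hu)
  have hΘflow : ∀ s t, 0 ≤ s → s ≤ t → Θ t = Θ s - ∫ r in s..t, γ r • F (Θ r) :=
    fun s t hs => eq_sub_integral_of_le (fun t ht => hv 0 t le_rfl ht) hflow hs t
  refine ⟨fun k t ht => ?_, fun s t hs hst => ?_⟩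
  · rw [(hψ k).contDiffOn.apply_eq_sub_integral_inner_gradient isOpen_univ ht (hv 0 t le_rfl ht)
      (fun u hu => hΘflow 0 u le_rfl hu.1) (mapsTo_univ _ _), sub_eq_self]
    refine intervalIntegral.integral_zero_ae (.of_forall fun u hu => ?_)
    rw [uIoc_of_le ht] at hu
    rw [real_inner_smul_right, inner_orthogonalPart_eq_zero (hpairwise _ (hΘU u hu.1.le)),
      mul_zero]
  · have hmaps : MapsTo Θ (Icc s t) U := fun u hu => hΘU u (hs.trans hu.1)
    obtain ⟨C, hC⟩ := hbdd _ hmaps.image_subset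
      (isCompact_Icc.image_of_continuousOn (hΘcont.mono fun u hu => hs.trans hu.1))
    have heq := apply_eq_sub_integral_inner_of_tendsto_gradient hU h𝔏 hlim𝓛 hlim𝒢 hst
      (hv s t hs (hs.trans hst)) (fun u hu => hΘflow s u hs hu.1) hmaps
      fun r u hu => hC r _ (mem_image_of_mem Θ hu)
    rw [intervalIntegral.integral_congr (g := fun u => γ u * ‖F (Θ u)‖ ^ 2) fun u hu => by
      rw [uIcc_of_le hst] at hu
      rw [real_inner_smul_right, inner_orthogonalPart_eq_norm_sq (hpairwise _ (hmaps hu))]] at heq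
    exact ⟨heq, heq ▸ sub_le_self _ (intervalIntegral.integral_nonneg hst fun u hu =>
      mul_nonneg (hγnonneg u (hs.trans hu.1)) (sq_nonneg _))⟩

/-- Corollary 2.4 (Gradient flow dynamics on submanifolds): conservation of the `ψ k`
along the projected flow and the energy descent identity. -/
theorem stmt2
    (𝔡 K : ℕ)
    (ψ : Fin K → EuclideanSpace ℝ (Fin 𝔡) → ℝ)
    (hψ : ∀ k, ContDiff ℝ 1 (ψ k))
    (U : Set (EuclideanSpace ℝ (Fin 𝔡)))
    (hUdef : U = {θ : EuclideanSpace ℝ (Fin 𝔡) | ∀ k : Fin K, 0 < ‖gradient (ψ k) θ‖})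
    (𝓛 : EuclideanSpace ℝ (Fin 𝔡) → ℝ) (h𝓛 : ContinuousOn 𝓛 U)
    (𝒢 : EuclideanSpace ℝ (Fin 𝔡) → EuclideanSpace ℝ (Fin 𝔡))
    (h𝒢meas : Measurable 𝒢)
    (h𝒢loc : ∀ θ ∈ U, ∃ r > (0:ℝ), ∃ C : ℝ, ∀ x ∈ Metric.ball θ r, ‖𝒢 x‖ ≤ C)
    (horth : ∀ θ ∈ U, ∀ k l : Fin K, k ≠ l →
      ⟪gradient (ψ k) θ, gradient (ψ l) θ⟫ = 0)
    (γ : ℝ → ℝ) (hγcont : ContinuousOn γ (Set.Ici 0)) (hγnonneg : ∀ t, 0 ≤ t → 0 ≤ γ t)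
    (Θ : ℝ → EuclideanSpace ℝ (Fin 𝔡))
    (hΘcont : ContinuousOn Θ (Set.Ici 0))
    (hΘU : ∀ t : ℝ, 0 ≤ t → Θ t ∈ U)
    (hflow : ∀ t : ℝ, 0 ≤ t → Θ t = Θ 0 - ∫ s in (0:ℝ)..t,
      γ s • (𝒢 (Θ s) - ∑ k : Fin K,
        ((‖gradient (ψ k) (Θ s)‖ ^ 2)⁻¹ * ⟪𝒢 (Θ s), gradient (ψ k) (Θ s)⟫) •
          gradient (ψ k) (Θ s)))
    (𝔏 : ℕ → EuclideanSpace ℝ (Fin 𝔡) → ℝ)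
    (h𝔏 : ∀ r : ℕ, ContDiffOn ℝ 1 (𝔏 r) U)
    (hbdd : ∀ Kc : Set (EuclideanSpace ℝ (Fin 𝔡)), Kc ⊆ U → IsCompact Kc →
      ∃ C : ℝ, ∀ r : ℕ, ∀ θ ∈ Kc, ‖gradient (𝔏 r) θ‖ ≤ C)
    (hlim𝓛 : ∀ θ ∈ U, Filter.Tendsto (fun r : ℕ => 𝔏 r θ) Filter.atTop (nhds (𝓛 θ)))
    (hlim𝒢 : ∀ θ ∈ U, Filter.Tendsto (fun r : ℕ => gradient (𝔏 r) θ) Filter.atTop (nhds (𝒢 θ))) :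
    (∀ k : Fin K, ∀ t : ℝ, 0 ≤ t → ψ k (Θ t) = ψ k (Θ 0)) ∧
    (∀ s t : ℝ, 0 ≤ s → s ≤ t →
      (𝓛 (Θ t) = 𝓛 (Θ s) - ∫ u in s..t,
        γ u * ‖𝒢 (Θ u) - ∑ k : Fin K,
          ((‖gradient (ψ k) (Θ u)‖ ^ 2)⁻¹ * ⟪𝒢 (Θ u), gradient (ψ k) (Θ u)⟫) •
            gradient (ψ k) (Θ u)‖ ^ 2) ∧
      𝓛 (Θ t) ≤ 𝓛 (Θ s)) :=
  stmt2_general 𝔡 K ψ hψ U hUdef 𝓛 𝒢 h𝒢meas h𝒢loc horth γ hγcont hγnonneg Θ hΘcont hΘU hflow 𝔏 h𝔏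
    hbdd hlim𝓛 hlim𝒢
end

section
/- Let θ = (θ₁,θ₂,θ₃) ∈ ℝ³ satisfy θ₁² + θ₂² = 1, q^θ ∈ (0,1), and θ₁ > 0. Then 𝔊₁(θ) = 2θ₃ ( (θ₁θ₂²θ₃/12)(1 − q^θ)²(7 + 2q^θ + 3(q^θ)²) + ∫_{q^θ}^1 (f̄ − f(s))(θ₂² s − θ₁θ₂) ds ) and 𝔊₃(θ) = 2θ₁²θ₃ (1 − q^θ)³ (1/12 + q^θ/4) + 2 ∫_{q^θ}^1 (f̄ − f(s)) max{θ₁s+θ₂,0} ds. -/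
open MeasureTheory Real Set
open scoped RealInnerProductSpace

/-- The mean value `f̄ = ∫₀¹ f(x) dx` of the target function. -/
noncomputable def fbar (f : ℝ → ℝ) : ℝ := ∫ s in (0:ℝ)..1, f s

/-- `m(θ) = ∫₀¹ max{θ₁ s + θ₂, 0} ds`. -/
noncomputable def mfun (θ : EuclideanSpace ℝ (Fin 3)) : ℝ :=
  ∫ s in (0:ℝ)..1, max (θ 0 * s + θ 1) 0

/-- The risk function `𝓛`. -/
noncomputable def riskL (f : ℝ → ℝ) (θ : EuclideanSpace ℝ (Fin 3)) : ℝ :=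
  ∫ s in (0:ℝ)..1, (θ 2 * (max (θ 0 * s + θ 1) 0 - mfun θ) + fbar f - f s) ^ 2

/-- `g(θ) = θ₁² + θ₂²`; the manifold `ℳ` is `g⁻¹(1)`. -/
noncomputable def gfun (θ : EuclideanSpace ℝ (Fin 3)) : ℝ := θ 0 ^ 2 + θ 1 ^ 2

/-- The activity interval `I^θ = {s ∈ [0,1] : θ₁ s + θ₂ > 0}`. -/
def Iact (θ : EuclideanSpace ℝ (Fin 3)) : Set ℝ :=
  {s ∈ Set.Icc (0:ℝ) 1 | 0 < θ 0 * s + θ 1}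

/-!
For `θ₁ > 0` and `q = -θ₂/θ₁ ∈ (0,1)` the ReLU feature `max (θ₁ s + θ₂) 0` vanishes on `[0, q]`
and is affine on `[q, 1]`. Hence its moments have the closed forms
`(θ₁ + θ₂)ⁿ⁺¹ / ((n + 1) θ₁)`, and its correlation with `f̄ - f` is
`θ₁ ∫_q^1 s (f̄ - f) + θ₂ ∫_q^1 (f̄ - f)`, whose derivative has no boundary term because the
affine integrand vanishes at `s = q`. As `∫₀¹ (f̄ - f) = 0`, the risk is
`θ₃² Var + 2 θ₃ Cov + const` in these quantities. On `ℳ`, where `∇g = 2 (θ₁, θ₂, 0)`, the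
projected gradient has `𝔊₁ = θ₂ ⟪∇𝓛, (θ₂, -θ₁, 0)⟫` and `𝔊₃ = ∂₃𝓛`, so only the derivatives of
`𝓛` along the tangent direction `(θ₂, -θ₁, 0)` and along `e₃` are needed.
-/

open Filter Topology

noncomputable def reluVariance (a b : ℝ) : ℝ :=
  (∫ s in (0:ℝ)..1, max (a * s + b) 0 ^ 2) - (∫ s in (0:ℝ)..1, max (a * s + b) 0) ^ 2

noncomputable def reluCovariance (h : ℝ → ℝ) (a b : ℝ) : ℝ :=
  ∫ s in (0:ℝ)..1, h s * max (a * s + b) 0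

section ReluFeature

variable {h : ℝ → ℝ} {a b : ℝ}

theorem integral_from_root_mul_relu_eq (ha : 0 < a) (hq : -b / a ≤ 1) :
    ∫ s in -b / a..1, h s * max (a * s + b) 0 = ∫ s in -b / a..1, h s * (a * s + b) := by
  refine intervalIntegral.integral_congr fun s hs => ?_
  rw [uIcc_of_le hq] at hs
  have : 0 ≤ a * s + b := by
    have := (div_le_iff₀ ha).1 hs.1
    linarith
  simp only [max_eq_left this]

theorem integral_mul_relu_eq_from_root (hh : ContinuousOn h (Icc 0 1)) (ha : 0 < a)
    (hq : -b / a ∈ Icc 0 1) :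
    ∫ s in (0:ℝ)..1, h s * max (a * s + b) 0 = ∫ s in -b / a..1, h s * max (a * s + b) 0 := by
  have hcont : ContinuousOn (fun s => h s * max (a * s + b) 0) (Icc 0 1) :=
    hh.mul (by fun_prop)
  rw [← intervalIntegral.integral_add_adjacent_intervals
    (hcont.mono (uIcc_subset_Icc (left_mem_Icc.2 zero_le_one) hq)).intervalIntegrable
    (hcont.mono (uIcc_subset_Icc hq (right_mem_Icc.2 zero_le_one))).intervalIntegrable,
    add_eq_right]
  refine (intervalIntegral.integral_congr fun s hs => ?_).trans intervalIntegral.integral_zero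
  rw [uIcc_of_le hq.1] at hs
  have : a * s + b ≤ 0 := by
    have := (le_div_iff₀ ha).1 hs.2
    linarith
  simp [max_eq_right this]

theorem integral_affine_pow_from_root (ha : a ≠ 0) (n : ℕ) :
    ∫ s in -b / a..1, (a * s + b) ^ n = (a + b) ^ (n + 1) / ((n + 1) * a) := by
  rw [intervalIntegral.integral_comp_mul_add (fun x => x ^ n) ha, integral_pow, smul_eq_mul,
    mul_div_cancel₀ _ ha]
  field_simp
  ring

theorem integral_mul_relu_eq (hh : ContinuousOn h (Icc 0 1)) (ha : 0 < a)
    (hq : -b / a ∈ Icc 0 1) :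
    ∫ s in (0:ℝ)..1, h s * max (a * s + b) 0 = ∫ s in -b / a..1, h s * (a * s + b) := by
  rw [integral_mul_relu_eq_from_root hh ha hq, integral_from_root_mul_relu_eq ha hq.2]

theorem integral_relu_eq (ha : 0 < a) (hq : -b / a ∈ Icc 0 1) :
    ∫ s in (0:ℝ)..1, max (a * s + b) 0 = (a + b) ^ 2 / (2 * a) := by
  have := integral_mul_relu_eq (h := fun _ => 1) continuousOn_const ha hq
  simp only [one_mul] at this
  rw [this]
  convert integral_affine_pow_from_root (b := b) ha.ne' 1 using 1 <;> norm_num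

theorem integral_relu_sq_eq (ha : 0 < a) (hq : -b / a ∈ Icc 0 1) :
    ∫ s in (0:ℝ)..1, max (a * s + b) 0 ^ 2 = (a + b) ^ 3 / (3 * a) := by
  have hsq : ∀ x : ℝ, max x 0 ^ 2 = x * max x 0 := fun x => by
    rcases le_total x 0 with hx | hx <;> simp [hx, sq]
  simp_rw [hsq, integral_mul_relu_eq (h := fun s => a * s + b) (by fun_prop) ha hq, ← sq]
  convert integral_affine_pow_from_root (b := b) ha.ne' 2 using 1
  norm_num

theorem reluVariance_eq (ha : 0 < a) (hq : -b / a ∈ Icc 0 1) :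
    reluVariance a b = (a + b) ^ 3 / (3 * a) - ((a + b) ^ 2 / (2 * a)) ^ 2 := by
  rw [reluVariance, integral_relu_sq_eq ha hq, integral_relu_eq ha hq]

theorem eventually_pos_and_root_mem_Ioo (ha : 0 < a) (hq : -b / a ∈ Ioo 0 1) (α β : ℝ) :
    ∀ᶠ t in 𝓝 (0:ℝ), 0 < a + t * α ∧ -(b + t * β) / (a + t * α) ∈ Ioo 0 1 := by
  have hcont : ContinuousAt (fun t : ℝ => (a + t * α, -(b + t * β) / (a + t * α))) 0 := by
    refine ContinuousAt.prodMk (by fun_prop) (ContinuousAt.div (by fun_prop) (by fun_prop) ?_)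
    simpa using ha.ne'
  have hmem : Ioi 0 ×ˢ Ioo 0 1 ∈ 𝓝 (a + 0 * α, -(b + 0 * β) / (a + 0 * α)) := by
    simp only [zero_mul, add_zero]
    exact prod_mem_nhds (Ioi_mem_nhds ha) (Ioo_mem_nhds hq.1 hq.2)
  exact hcont.eventually_mem hmem

theorem hasDerivAt_integral_to_one (hh : ContinuousOn h (Icc 0 1)) {u : ℝ}
    (hu : u ∈ Ioo 0 1) :
    HasDerivAt (fun u => ∫ s in u..1, h s) (-h u) u :=
  intervalIntegral.integral_hasDerivAt_left
    (hh.mono (uIcc_subset_Icc (Ioo_subset_Icc_self hu)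
      (right_mem_Icc.2 zero_le_one))).intervalIntegrable
    ((hh.mono Ioo_subset_Icc_self).stronglyMeasurableAtFilter isOpen_Ioo u hu)
    (hh.continuousAt (Icc_mem_nhds hu.1 hu.2))

theorem integral_mul_affine (hh : ContinuousOn h (Icc 0 1)) {u : ℝ} (hu : u ∈ Icc 0 1)
    (α β : ℝ) :
    ∫ s in u..1, h s * (α * s + β) = α * (∫ s in u..1, s * h s) + β * ∫ s in u..1, h s := by
  have hI : uIcc u 1 ⊆ Icc 0 1 := uIcc_subset_Icc hu (right_mem_Icc.2 zero_le_one)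
  have hsh : ContinuousOn (fun s => s * h s) (Icc 0 1) := continuousOn_id.mul hh
  rw [intervalIntegral.integral_congr (g := fun s => α * (s * h s) + β * h s)
      fun s _ => by ring,
    intervalIntegral.integral_add
      ((hsh.mono hI).intervalIntegrable.const_mul α)
      ((hh.mono hI).intervalIntegrable.const_mul β),
    intervalIntegral.integral_const_mul, intervalIntegral.integral_const_mul]

theorem hasDerivAt_reluVariance_line (ha : 0 < a) (hq : -b / a ∈ Ioo 0 1) (α β : ℝ) :
    HasDerivAt (fun t => reluVariance (a + t * α) (b + t * β))
      ((a + b) ^ 2 * (α * (a + b) * (a + 3 * b) - 6 * a * b * (α + β)) / (6 * a ^ 3)) 0 := by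
  have hd : HasDerivAt (fun t => a + t * α) α 0 := by
    simpa using ((hasDerivAt_id (0:ℝ)).mul_const α).const_add a
  have hp : HasDerivAt (fun t => a + t * α + (b + t * β)) (α + β) 0 :=
    hd.add (by simpa using ((hasDerivAt_id (0:ℝ)).mul_const β).const_add b)
  have hd0 : ∀ c : ℝ, c ≠ 0 → c * (a + 0 * α) ≠ 0 := fun c hc => by simp [hc, ha.ne']
  have hclosed := ((hp.pow 3).div (hd.const_mul 3) (hd0 3 three_ne_zero)).sub
    (((hp.pow 2).div (hd.const_mul 2) (hd0 2 two_ne_zero)).pow 2)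
  refine (hclosed.congr_deriv ?_).congr_of_eventuallyEq ?_
  · have := ha.ne'
    simp only [Pi.pow_apply, Pi.div_apply, zero_mul, add_zero, Nat.cast_ofNat, Nat.reduceSub,
      pow_one]
    field_simp
    ring
  · filter_upwards [eventually_pos_and_root_mem_Ioo ha hq α β] with t ht
    exact reluVariance_eq ht.1 (Ioo_subset_Icc_self ht.2)

theorem hasDerivAt_reluCovariance_line (hh : ContinuousOn h (Icc 0 1)) (ha : 0 < a)
    (hq : -b / a ∈ Ioo 0 1) (α β : ℝ) :
    HasDerivAt (fun t => reluCovariance h (a + t * α) (b + t * β))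
      (∫ s in -b / a..1, h s * (α * s + β)) 0 := by
  have hsh : ContinuousOn (fun s => s * h s) (Icc 0 1) := continuousOn_id.mul hh
  have hd : HasDerivAt (fun t => a + t * α) α 0 := by
    simpa using ((hasDerivAt_id (0:ℝ)).mul_const α).const_add a
  have he : HasDerivAt (fun t => b + t * β) β 0 := by
    simpa using ((hasDerivAt_id (0:ℝ)).mul_const β).const_add b
  have hroot : HasDerivAt (fun t => -(b + t * β) / (a + t * α))
      ((-β * (a + 0 * α) - -(b + 0 * β) * α) / (a + 0 * α) ^ 2) 0 :=
    he.neg.div hd (by simp [ha.ne'])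
  have h0 : -b / a = -(b + 0 * β) / (a + 0 * α) := by simp
  have hclosed :=
    (hd.mul (HasDerivAt.comp_of_eq 0 (hasDerivAt_integral_to_one hsh hq) hroot h0)).add
      (he.mul (HasDerivAt.comp_of_eq 0 (hasDerivAt_integral_to_one hh hq) hroot h0))
  rw [integral_mul_affine hh (Ioo_subset_Icc_self hq)]
  refine (hclosed.congr_deriv ?_).congr_of_eventuallyEq ?_
  · have := ha.ne'
    simp only [Function.comp, zero_mul, add_zero, neg_div]
    field_simp
    ring
  · filter_upwards [eventually_pos_and_root_mem_Ioo ha hq α β] with t ht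
    rw [reluCovariance, integral_mul_relu_eq hh ht.1 (Ioo_subset_Icc_self ht.2),
      integral_mul_affine hh (Ioo_subset_Icc_self ht.2)]
    rfl

end ReluFeature

theorem integral_sq_centered_add {φ h : ℝ → ℝ} (hφ : ContinuousOn φ (Icc 0 1))
    (hh : ContinuousOn h (Icc 0 1)) (h0 : ∫ s in (0:ℝ)..1, h s = 0) (c : ℝ) :
    ∫ s in (0:ℝ)..1, (c * (φ s - ∫ r in (0:ℝ)..1, φ r) + h s) ^ 2
      = c ^ 2 * ((∫ s in (0:ℝ)..1, φ s ^ 2) - (∫ s in (0:ℝ)..1, φ s) ^ 2)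
        + 2 * c * (∫ s in (0:ℝ)..1, h s * φ s) + ∫ s in (0:ℝ)..1, h s ^ 2 := by
  set m := ∫ r in (0:ℝ)..1, φ r
  have hint {u : ℝ → ℝ} (hu : ContinuousOn u (Icc 0 1)) : IntervalIntegrable u volume 0 1 :=
    hu.intervalIntegrable_of_Icc zero_le_one
  calc ∫ s in (0:ℝ)..1, (c * (φ s - m) + h s) ^ 2
      = ∫ s in (0:ℝ)..1, ((c ^ 2 * φ s ^ 2 + 2 * c * (h s * φ s) + h s ^ 2)
          - (2 * c ^ 2 * m * φ s + 2 * c * m * h s) + c ^ 2 * m ^ 2) :=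
        intervalIntegral.integral_congr fun s _ => by ring
    _ = (c ^ 2 * (∫ s in (0:ℝ)..1, φ s ^ 2) + 2 * c * (∫ s in (0:ℝ)..1, h s * φ s)
          + ∫ s in (0:ℝ)..1, h s ^ 2)
          - (2 * c ^ 2 * m * m + 2 * c * m * ∫ s in (0:ℝ)..1, h s) + c ^ 2 * m ^ 2 := by
        rw [intervalIntegral.integral_add _ intervalIntegrable_const,
          intervalIntegral.integral_sub, intervalIntegral.integral_add,
          intervalIntegral.integral_add, intervalIntegral.integral_add,
          intervalIntegral.integral_const_mul, intervalIntegral.integral_const_mul,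
          intervalIntegral.integral_const_mul, intervalIntegral.integral_const_mul,
          intervalIntegral.integral_const]
        · simp [m]
        all_goals exact hint (by fun_prop)
    _ = _ := by rw [h0]; ring

theorem riskL_eq {f : ℝ → ℝ} (hf : ContinuousOn f (Icc 0 1))
    (θ : EuclideanSpace ℝ (Fin 3)) :
    riskL f θ = θ 2 ^ 2 * reluVariance (θ 0) (θ 1)
      + 2 * θ 2 * reluCovariance (fun s => fbar f - f s) (θ 0) (θ 1)
      + ∫ s in (0:ℝ)..1, (fbar f - f s) ^ 2 := by
  have h0 : ∫ s in (0:ℝ)..1, (fbar f - f s) = 0 := by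
    rw [intervalIntegral.integral_sub intervalIntegrable_const
      (hf.intervalIntegrable_of_Icc zero_le_one)]
    simp [fbar]
  rw [reluVariance, reluCovariance,
    ← integral_sq_centered_add (φ := fun s => max (θ 0 * s + θ 1) 0)
      (h := fun s => fbar f - f s) (by fun_prop) (continuousOn_const.sub hf) h0]
  exact intervalIntegral.integral_congr fun s _ => by simp only [mfun]; ring

theorem hasDerivAt_riskL_line {f : ℝ → ℝ} (hf : ContinuousOn f (Icc 0 1))
    (θ : EuclideanSpace ℝ (Fin 3)) (α β γ : ℝ) {K' A' : ℝ}
    (hK : HasDerivAt (fun t => reluVariance (θ 0 + t * α) (θ 1 + t * β)) K' 0)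
    (hA : HasDerivAt (fun t => reluCovariance (fun s => fbar f - f s)
      (θ 0 + t * α) (θ 1 + t * β)) A' 0) :
    HasDerivAt (fun t : ℝ => riskL f (θ + t • !₂[α, β, γ]))
      (2 * θ 2 * γ * reluVariance (θ 0) (θ 1) + θ 2 ^ 2 * K'
        + 2 * γ * reluCovariance (fun s => fbar f - f s) (θ 0) (θ 1) + 2 * θ 2 * A') 0 := by
  have hc : HasDerivAt (fun t => θ 2 + t * γ) γ 0 := by
    simpa using ((hasDerivAt_id (0:ℝ)).mul_const γ).const_add (θ 2)
  have h := (((hc.pow 2).mul hK).add ((hc.const_mul 2).mul hA)).add_const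
    (∫ s in (0:ℝ)..1, (fbar f - f s) ^ 2)
  refine (h.congr_deriv ?_).congr_of_eventuallyEq (Eventually.of_forall fun t => ?_)
  · simp
    ring
  · simp [riskL_eq hf]

theorem inner_gradient_eq_of_hasDerivAt {E : Type*} [NormedAddCommGroup E]
    [InnerProductSpace ℝ E] [CompleteSpace E] {L : E → ℝ} {x v : E} {D : ℝ}
    (hL : DifferentiableAt ℝ L x)
    (h : HasDerivAt (fun t : ℝ => L (x + t • v)) D 0) :
    ⟪gradient L x, v⟫ = D := by
  rw [← (hL.hasGradientAt.hasFDerivAt.hasLineDerivAt v).unique h,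
    InnerProductSpace.toDual_apply_apply]

theorem gradient_gfun (θ : EuclideanSpace ℝ (Fin 3)) :
    gradient gfun θ = !₂[2 * θ 0, 2 * θ 1, 0] := by
  refine HasGradientAt.gradient (hasGradientAt_iff_hasFDerivAt.2 ?_)
  have h := (((EuclideanSpace.proj (𝕜 := ℝ) (0 : Fin 3)).hasFDerivAt (x := θ)).pow 2).add
    (((EuclideanSpace.proj (𝕜 := ℝ) (1 : Fin 3)).hasFDerivAt (x := θ)).pow 2)
  refine h.congr_fderiv ?_
  ext v
  simp [PiLp.inner_apply, Fin.sum_univ_three]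
  ring

theorem tangentProjection_apply (G : EuclideanSpace ℝ (Fin 3)) {a b : ℝ}
    (hab : a ^ 2 + b ^ 2 = 1) :
    (G - ((‖!₂[2 * a, 2 * b, 0]‖ ^ 2)⁻¹ * ⟪G, !₂[2 * a, 2 * b, 0]⟫) • !₂[2 * a, 2 * b, 0]) 0
        = b * ⟪G, !₂[b, -a, 0]⟫ ∧
      (G - ((‖!₂[2 * a, 2 * b, 0]‖ ^ 2)⁻¹ * ⟪G, !₂[2 * a, 2 * b, 0]⟫) • !₂[2 * a, 2 * b, 0]) 2
        = ⟪G, !₂[0, 0, 1]⟫ := by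
  have hn : ‖(!₂[2 * a, 2 * b, 0] : EuclideanSpace ℝ (Fin 3))‖ ^ 2 = 4 := by
    rw [EuclideanSpace.real_norm_sq_eq]
    simp [Fin.sum_univ_three]
    linear_combination 4 * hab
  simp only [hn, PiLp.inner_apply, Fin.sum_univ_three]
  refine ⟨?_, by simp⟩
  simp
  linear_combination (-G 0) * hab

theorem stmt13_general
    (f : ℝ → ℝ) (hf : ContinuousOn f (Set.Icc 0 1))
    (h𝓛diff : ∀ θ : EuclideanSpace ℝ (Fin 3), 0 < |θ 0| + |θ 1| →
      DifferentiableAt ℝ (riskL f) θ)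
    (𝔊 : EuclideanSpace ℝ (Fin 3) → EuclideanSpace ℝ (Fin 3))
    (h𝔊 : ∀ θ : EuclideanSpace ℝ (Fin 3), 0 < |θ 0| + |θ 1| →
      𝔊 θ = gradient (riskL f) θ -
        ((‖gradient gfun θ‖ ^ 2)⁻¹ * ⟪gradient (riskL f) θ, gradient gfun θ⟫) •
          gradient gfun θ)
    (θ : EuclideanSpace ℝ (Fin 3)) (hθM : θ 0 ^ 2 + θ 1 ^ 2 = 1)
    (q : ℝ) (hq : q = -(θ 1) / θ 0) (hq01 : q ∈ Set.Ioo (0:ℝ) 1) (hθ1 : 0 < θ 0) :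
    𝔊 θ 0 = 2 * θ 2 * (θ 0 * θ 1 ^ 2 * θ 2 / 12 * (1 - q) ^ 2 * (7 + 2 * q + 3 * q ^ 2)
        + ∫ s in q..1, (fbar f - f s) * (θ 1 ^ 2 * s - θ 0 * θ 1)) ∧
    𝔊 θ 2 = 2 * θ 0 ^ 2 * θ 2 * (1 - q) ^ 3 * (1 / 12 + q / 4)
        + 2 * ∫ s in q..1, (fbar f - f s) * max (θ 0 * s + θ 1) 0 := by
  subst hq
  have hpos : 0 < |θ 0| + |θ 1| := add_pos_of_pos_of_nonneg (abs_pos.2 hθ1.ne') (abs_nonneg _)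
  have hh : ContinuousOn (fun s => fbar f - f s) (Icc 0 1) := continuousOn_const.sub hf
  have hd := h𝓛diff θ hpos
  have htangent := inner_gradient_eq_of_hasDerivAt hd (hasDerivAt_riskL_line hf θ (θ 1) (-θ 0) 0
    (hasDerivAt_reluVariance_line hθ1 hq01 _ _) (hasDerivAt_reluCovariance_line hh hθ1 hq01 _ _))
  have hbias := inner_gradient_eq_of_hasDerivAt hd (hasDerivAt_riskL_line hf θ 0 0 1 (K' := 0)
    (A' := 0) (by simpa using hasDerivAt_const _ _) (by simpa using hasDerivAt_const _ _))
  obtain ⟨h𝔊₁, h𝔊₃⟩ := tangentProjection_apply (gradient (riskL f) θ) hθM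
  rw [h𝔊 θ hpos, gradient_gfun, h𝔊₁, h𝔊₃, htangent, hbias,
    reluVariance_eq hθ1 (Ioo_subset_Icc_self hq01), reluCovariance,
    integral_mul_relu_eq_from_root hh hθ1 (Ioo_subset_Icc_self hq01)]
  have hθ₀ : θ 0 ≠ 0 := hθ1.ne'
  constructor
  · have hint : ∫ s in -θ 1 / θ 0..1, (fbar f - f s) * (θ 1 ^ 2 * s - θ 0 * θ 1)
        = θ 1 * ∫ s in -θ 1 / θ 0..1, (fbar f - f s) * (θ 1 * s + -θ 0) := by
      rw [← intervalIntegral.integral_const_mul]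
      exact intervalIntegral.integral_congr fun s _ => by ring
    rw [hint]
    field_simp
    ring
  · field_simp
    ring

/-- Lemma 3.8(iv): explicit formulas for `𝔊₁(θ)` and `𝔊₃(θ)` for `θ ∈ ℳ` with breakpoint
`q^θ = -θ₂/θ₁ ∈ (0,1)` and `θ₁ > 0`. -/
theorem stmt13
    (f : ℝ → ℝ) (hf : ContinuousOn f (Set.Icc 0 1))
    (h𝓛diff : ∀ θ : EuclideanSpace ℝ (Fin 3), 0 < |θ 0| + |θ 1| →
      DifferentiableAt ℝ (riskL f) θ)
    (𝔊 : EuclideanSpace ℝ (Fin 3) → EuclideanSpace ℝ (Fin 3))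
    (h𝔊meas : Measurable 𝔊)
    (h𝔊loc : ∀ θ : EuclideanSpace ℝ (Fin 3),
      ∃ r > (0:ℝ), ∃ C : ℝ, ∀ x ∈ Metric.ball θ r, ‖𝔊 x‖ ≤ C)
    (h𝔊 : ∀ θ : EuclideanSpace ℝ (Fin 3), 0 < |θ 0| + |θ 1| →
      𝔊 θ = gradient (riskL f) θ -
        ((‖gradient gfun θ‖ ^ 2)⁻¹ * ⟪gradient (riskL f) θ, gradient gfun θ⟫) •
          gradient gfun θ)
    (θ : EuclideanSpace ℝ (Fin 3)) (hθM : θ 0 ^ 2 + θ 1 ^ 2 = 1)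
    (q : ℝ) (hq : q = -(θ 1) / θ 0) (hq01 : q ∈ Set.Ioo (0:ℝ) 1) (hθ1 : 0 < θ 0) :
    𝔊 θ 0 = 2 * θ 2 * (θ 0 * θ 1 ^ 2 * θ 2 / 12 * (1 - q) ^ 2 * (7 + 2 * q + 3 * q ^ 2)
        + ∫ s in q..1, (fbar f - f s) * (θ 1 ^ 2 * s - θ 0 * θ 1)) ∧
    𝔊 θ 2 = 2 * θ 0 ^ 2 * θ 2 * (1 - q) ^ 3 * (1 / 12 + q / 4)
        + 2 * ∫ s in q..1, (fbar f - f s) * max (θ 0 * s + θ 1) 0 :=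
  stmt13_general f hf h𝓛diff 𝔊 h𝔊 θ hθM q hq hq01 hθ1
end
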